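/- Let w ≥ 4, fix integers n > m ≥ 1, and let s ≥ 0 satisfy 2^s ≤ w−2. Let x : ℤ → F₂^w be a sequence satisfying x_{k+n} = x_{k+m} + x_{k+1}·B + x_k·C for all k ∈ ℤ. Then for every i ∈ ℤ, the equality x_{i+2^s(m-1)} = x_{i+2^s(n-1)} holds if and only if x_i·B^{2^s} + x_{i-1}·Q_{2^s} = 0. -/
import Mathlib


open Matrix

/-- The matrix `B` of MT-type recursions: first row zero, row `i` (0-indexed,
`1 ≤ i ≤ w-2`) is the standard basis row vector with a `1` in column `i+1`,
and the last row is `(a_{w-1}, …, a_0)` (stored as `a 0, …, a (w-1)`). -/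
def mtB (w : ℕ) (a : Fin w → ZMod 2) : Matrix (Fin w) (Fin w) (ZMod 2) :=
  Matrix.of fun i j =>
    if (i : ℕ) = w - 1 then a j
    else if 1 ≤ (i : ℕ) ∧ (j : ℕ) = (i : ℕ) + 1 then 1 else 0

/-- The matrix `C`: its only nonzero entry is a `1` in position `(1,2)` (1-indexed). -/
def mtC (w : ℕ) : Matrix (Fin w) (Fin w) (ZMod 2) :=
  Matrix.of fun i j => if (i : ℕ) = 0 ∧ (j : ℕ) = 1 then 1 else 0

/-- `Q_k = Σ_{i=0}^{k-1} B^i · C · B^{k-1-i}`. -/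
def mtQ (w : ℕ) (a : Fin w → ZMod 2) (k : ℕ) : Matrix (Fin w) (Fin w) (ZMod 2) :=
  ∑ i ∈ Finset.range k, (mtB w a) ^ i * mtC w * (mtB w a) ^ (k - 1 - i)

lemma bpow_entry (w : ℕ) (hw : 4 ≤ w) (a : Fin w → ZMod 2) :
    ∀ e : ℕ, e ≤ w - 2 → ∀ j : Fin w,
      ((mtB w a) ^ e) ⟨1, by omega⟩ j = if (j : ℕ) = 1 + e then 1 else 0 := by
  intro e
  induction e with
  | zero =>
    intro _ j
    simp [Matrix.one_apply, Fin.ext_iff, eq_comm]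
  | succ e ih =>
    intro he j
    rw [pow_succ, Matrix.mul_apply]
    have hlt : 1 + e < w := by omega
    have hk : ∀ k : Fin w, ((mtB w a) ^ e) ⟨1, by omega⟩ k * mtB w a k j
        = if k = (⟨1 + e, hlt⟩ : Fin w) then mtB w a k j else 0 := by
      intro k
      rw [ih (by omega) k]
      by_cases h : (k : ℕ) = 1 + e
      · simp [Fin.ext_iff, h]
      · simp [Fin.ext_iff, h]
    simp only [hk]
    rw [Finset.sum_ite_eq' Finset.univ]
    simp only [Finset.mem_univ, if_true]
    have h1 : ¬ (1 + e = w - 1) := by omega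
    simp only [mtB, Matrix.of_apply, h1, if_false]
    have h2 : 1 ≤ 1 + e := by omega
    by_cases hj : (j : ℕ) = 1 + (e + 1)
    · simp [h2, hj]; omega
    · simp [h2, hj]; omega

lemma mtC_mul_mul_mtC (w : ℕ) (hw : 4 ≤ w) (M : Matrix (Fin w) (Fin w) (ZMod 2))
    (h10 : M ⟨1, by omega⟩ ⟨0, by omega⟩ = 0) : mtC w * M * mtC w = 0 := by
  ext i j
  rw [Matrix.mul_apply]
  have hterm : ∀ k : Fin w, (mtC w * M) i k * mtC w k j
      = if (i : ℕ) = 0 ∧ (k : ℕ) = 0 ∧ (j : ℕ) = 1 then M ⟨1, by omega⟩ ⟨0, by omega⟩ else 0 := by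
    intro k
    rw [Matrix.mul_apply]
    have h2 : ∀ l : Fin w, mtC w i l * M l k
        = if (i : ℕ) = 0 ∧ (l : ℕ) = 1 then M l k else 0 := by
      intro l
      simp only [mtC, Matrix.of_apply]
      by_cases h : (i : ℕ) = 0 ∧ (l : ℕ) = 1 <;> simp [h]
    simp only [h2]
    by_cases hi : (i : ℕ) = 0
    · have : ∀ l : Fin w, ((i:ℕ) = 0 ∧ (l:ℕ) = 1) ↔ l = (⟨1, by omega⟩ : Fin w) := by
        intro l; simp [hi, Fin.ext_iff]
      simp only [this]
      rw [Finset.sum_ite_eq' Finset.univ]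
      simp only [Finset.mem_univ, if_true, mtC, Matrix.of_apply]
      by_cases hkj : (k : ℕ) = 0 ∧ (j : ℕ) = 1
      · simp [hi, hkj, show k = (⟨0, by omega⟩ : Fin w) from Fin.ext hkj.1]
      · rcases Decidable.not_and_iff_or_not.mp hkj with h | h
        · simp [hi, h, hkj]
        · simp [hi, h, hkj]
    · simp [hi]
  simp only [hterm, h10]
  simp

lemma cbc (w : ℕ) (hw : 4 ≤ w) (a : Fin w → ZMod 2) (e : ℕ) (he : e ≤ w - 2) :
    mtC w * (mtB w a) ^ e * mtC w = 0 := by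
  apply mtC_mul_mul_mtC w hw
  rw [bpow_entry w hw a e he]
  simp; omega

lemma qq_zero (w : ℕ) (hw : 4 ≤ w) (a : Fin w → ZMod 2) (t : ℕ) (ht : 2 * t ≤ w) :
    mtQ w a t * mtQ w a t = 0 := by
  unfold mtQ
  rw [Finset.sum_mul_sum]
  apply Finset.sum_eq_zero
  intro i hi
  apply Finset.sum_eq_zero
  intro j hj
  rw [Finset.mem_range] at hi hj
  have : (mtB w a) ^ i * mtC w * (mtB w a) ^ (t - 1 - i) * ((mtB w a) ^ j * mtC w * (mtB w a) ^ (t - 1 - j))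
      = (mtB w a) ^ i * (mtC w * (mtB w a) ^ (t - 1 - i + j) * mtC w) * (mtB w a) ^ (t - 1 - j) := by
    rw [pow_add]; noncomm_ring
  rw [this, cbc w hw a _ (by omega)]
  simp

lemma q_double (w : ℕ) (a : Fin w → ZMod 2) (t : ℕ) :
    mtQ w a (t + t) = mtQ w a t * (mtB w a) ^ t + (mtB w a) ^ t * mtQ w a t := by
  unfold mtQ
  rw [Finset.sum_range_add, Finset.sum_mul, Finset.mul_sum]
  congr 1
  · apply Finset.sum_congr rfl
    intro i hi
    rw [Finset.mem_range] at hi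
    have : t + t - 1 - i = (t - 1 - i) + t := by omega
    rw [this, pow_add]; noncomm_ring
  · apply Finset.sum_congr rfl
    intro i hi
    rw [Finset.mem_range] at hi
    have : t + t - 1 - (t + i) = t - 1 - i := by omega
    rw [this, pow_add]; noncomm_ring

lemma vadd_self (w : ℕ) (v : Fin w → ZMod 2) : v + v = 0 := by
  funext j
  exact CharTwo.add_self_eq_zero (v j)

lemma key_lemma (w : ℕ) (hw : 4 ≤ w) (a : Fin w → ZMod 2) (n m : ℤ)
    (x : ℤ → Fin w → ZMod 2)
    (hx : ∀ k : ℤ, x (k + n) = x (k + m) + x (k + 1) ᵥ* mtB w a + x k ᵥ* mtC w) :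
    ∀ s : ℕ, 2 ^ s ≤ w - 2 → ∀ k : ℤ,
      x (k + 2 ^ s * (n - 1)) + x (k + 2 ^ s * (m - 1)) =
        x k ᵥ* (mtB w a) ^ (2 ^ s) + x (k - 1) ᵥ* mtQ w a (2 ^ s) := by
  intro s
  induction s with
  | zero =>
    intro _ k
    simp only [pow_zero, pow_one, one_mul]
    have hq1 : mtQ w a 1 = mtC w := by
      unfold mtQ
      simp
    have h := hx (k - 1)
    rw [show (k + (n - 1) : ℤ) = (k - 1) + n by ring,
        show (k + (m - 1) : ℤ) = (k - 1) + m by ring, h, hq1,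
        show (k - 1 + 1 : ℤ) = k by ring]
    rw [show ∀ A U V : Fin w → ZMod 2, A + U + V + A = (U + V) + (A + A) by intros; abel]
    rw [vadd_self, add_zero]
  | succ s ih =>
    intro hs k
    have hsle : 2 ^ s ≤ w - 2 := by
      have : 2 ^ s < 2 ^ (s + 1) := by
        apply Nat.pow_lt_pow_right <;> omega
      omega
    have IH := ih hsle
    have h1 := IH (k + 2 ^ s * (n - 1))
    have h2 := IH (k + 2 ^ s * (m - 1))
    have h3 := IH k
    have h4 := IH (k - 1)
    have hmid : x (k + 2 ^ s * (n - 1) + 2 ^ s * (m - 1))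
        = x (k + 2 ^ s * (m - 1) + 2 ^ s * (n - 1)) := by ring_nf
    have hsum : x (k + 2 ^ s * (n - 1) + 2 ^ s * (n - 1)) + x (k + 2 ^ s * (m - 1) + 2 ^ s * (m - 1))
        = (x k ᵥ* (mtB w a) ^ (2 ^ s) + x (k - 1) ᵥ* mtQ w a (2 ^ s)) ᵥ* (mtB w a) ^ (2 ^ s)
          + (x (k - 1) ᵥ* (mtB w a) ^ (2 ^ s) + x (k - 1 - 1) ᵥ* mtQ w a (2 ^ s)) ᵥ* mtQ w a (2 ^ s) := by
      have expand : x (k + 2 ^ s * (n - 1) + 2 ^ s * (n - 1)) + x (k + 2 ^ s * (m - 1) + 2 ^ s * (m - 1))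
          = (x (k + 2 ^ s * (n - 1) + 2 ^ s * (n - 1)) + x (k + 2 ^ s * (n - 1) + 2 ^ s * (m - 1)))
            + (x (k + 2 ^ s * (m - 1) + 2 ^ s * (n - 1)) + x (k + 2 ^ s * (m - 1) + 2 ^ s * (m - 1))) := by
        rw [hmid]
        rw [show ∀ A X B' : Fin w → ZMod 2, (A + X) + (X + B') = (A + B') + (X + X) by
          intros; abel]
        rw [vadd_self, add_zero]
      rw [expand, h1, h2]
      have h1' : x (k + 2 ^ s * (n - 1) - 1) = x (k - 1 + 2 ^ s * (n - 1)) := by ring_nf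
      have h2' : x (k + 2 ^ s * (m - 1) - 1) = x (k - 1 + 2 ^ s * (m - 1)) := by ring_nf
      rw [h1', h2']
      rw [show ∀ A B' C' D' : Fin w → ZMod 2, (A + B') + (C' + D') = (A + C') + (B' + D') by
        intros; abel]
      rw [← Matrix.add_vecMul, ← Matrix.add_vecMul, h3, h4]
    have earg1 : k + 2 ^ (s + 1) * (n - 1) = k + 2 ^ s * (n - 1) + 2 ^ s * (n - 1) := by ring
    have earg2 : k + 2 ^ (s + 1) * (m - 1) = k + 2 ^ s * (m - 1) + 2 ^ s * (m - 1) := by ring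
    rw [earg1, earg2, hsum]
    have hpow : (2 : ℕ) ^ (s + 1) = 2 ^ s + 2 ^ s := by ring
    rw [hpow, q_double w a (2 ^ s), pow_add]
    rw [Matrix.add_vecMul, Matrix.add_vecMul, Matrix.vecMul_vecMul, Matrix.vecMul_vecMul,
        Matrix.vecMul_vecMul, Matrix.vecMul_vecMul, Matrix.vecMul_add]
    rw [qq_zero w hw a (2 ^ s) (by omega), Matrix.vecMul_zero, add_zero]
    abel

/-- for an MT-type sequence, the repetition
`x_{i+2^s(m-1)} = x_{i+2^s(n-1)}` is equivalent to `x_i·B^{2^s} + x_{i-1}·Q_{2^s} = 0`. -/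
theorem stmt8 (w : ℕ) (hw : 4 ≤ w) (a : Fin w → ZMod 2) (n m : ℤ)
    (hm : 1 ≤ m) (hmn : m < n) (s : ℕ) (hs : 2 ^ s ≤ w - 2)
    (x : ℤ → Fin w → ZMod 2)
    (hx : ∀ k : ℤ, x (k + n) = x (k + m) + x (k + 1) ᵥ* mtB w a + x k ᵥ* mtC w)
    (i : ℤ) :
    x (i + 2 ^ s * (m - 1)) = x (i + 2 ^ s * (n - 1)) ↔
    x i ᵥ* (mtB w a) ^ (2 ^ s) + x (i - 1) ᵥ* mtQ w a (2 ^ s) = 0 := by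
  have h := key_lemma w hw a n m x hx s hs i
  constructor
  · intro he
    rw [← h, ← he, vadd_self]
  · intro h0
    rw [← h] at h0
    calc x (i + 2 ^ s * (m - 1))
        = x (i + 2 ^ s * (n - 1))
          + (x (i + 2 ^ s * (n - 1)) + x (i + 2 ^ s * (m - 1))) := by
          rw [← add_assoc, vadd_self, zero_add]
      _ = x (i + 2 ^ s * (n - 1)) := by rw [h0, add_zero]
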